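/- arXiv:0909.2011 — 7 statements merged into one kernel-verified Lean document; each statement's English description precedes it below -/
import Mathlib

section
/- If J₊ and J₋ are complex structures on a 4-dimensional real vector space V (i.e. J₊² = J₋² = -Id) satisfying J₊J₋ + J₋J₊ = 2p·Id for a real constant p with |p| > 1, then the endomorphisms J₊, K = (1/(2√(p²-1)))[J₊,J₋], and S = -(1/√(p²-1))(J₋ + p J₊) satisfy J₊² = -Id, K² = Id, S² = Id, and J₊K = S, K J₊ = -S, i.e. they form a para-quaternionic (split-quaternionic) triple. -/
open Module

theorem stmt0 (V : Type*) [AddCommGroup V] [Module ℝ V] [FiniteDimensional ℝ V]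
    (hdim : finrank ℝ V = 4)
    (Jp Jm : Module.End ℝ V) (p : ℝ) (hp : 1 < |p|)
    (hJp : Jp * Jp = -1) (hJm : Jm * Jm = -1)
    (hanti : Jp * Jm + Jm * Jp = (2 * p) • (1 : Module.End ℝ V)) :
    let K : Module.End ℝ V := (1 / (2 * Real.sqrt (p ^ 2 - 1))) • (Jp * Jm - Jm * Jp)
    let S : Module.End ℝ V := -((1 / Real.sqrt (p ^ 2 - 1)) • (Jm + p • Jp))
    Jp * Jp = -1 ∧ K * K = 1 ∧ S * S = 1 ∧ Jp * K = S ∧ K * Jp = -S := by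
  intro K S
  have hq0 : (0:ℝ) < p ^ 2 - 1 := by
    have := sq_abs p
    nlinarith [abs_nonneg p]
  set q := Real.sqrt (p ^ 2 - 1) with hqdef
  have hq : q ^ 2 = p ^ 2 - 1 := Real.sq_sqrt hq0.le
  have hqpos : 0 < q := Real.sqrt_pos.mpr hq0
  have hqne : q ≠ 0 := ne_of_gt hqpos
  have h1 : Jm * Jp = (2 * p) • (1 : Module.End ℝ V) - Jp * Jm :=
    eq_sub_of_add_eq' hanti
  -- A² = 2p A - 1
  have hA : (Jp * Jm) * (Jp * Jm) = (2 * p) • (Jp * Jm) - 1 := by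
    have e : (Jp * Jm) * (Jp * Jm) = Jp * (Jm * Jp) * Jm := by noncomm_ring
    rw [e, h1]
    simp only [mul_sub, sub_mul, mul_smul_comm, smul_mul_assoc, mul_one, one_mul]
    rw [show Jp * (Jp * Jm) * Jm = (Jp * Jp) * (Jm * Jm) by noncomm_ring, hJp, hJm]
    noncomm_ring
  have hB : (Jm * Jp) * (Jm * Jp) = (2 * p) • (Jm * Jp) - 1 := by
    have e : (Jm * Jp) * (Jm * Jp) = Jm * (Jp * Jm) * Jp := by noncomm_ring
    rw [e, show Jp * Jm = (2 * p) • (1 : Module.End ℝ V) - Jm * Jp from eq_sub_of_add_eq hanti]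
    simp only [mul_sub, sub_mul, mul_smul_comm, smul_mul_assoc, mul_one, one_mul]
    rw [show Jm * (Jm * Jp) * Jp = (Jm * Jm) * (Jp * Jp) by noncomm_ring, hJp, hJm]
    noncomm_ring
  have hAB : (Jp * Jm) * (Jm * Jp) = 1 := by
    rw [show (Jp * Jm) * (Jm * Jp) = Jp * (Jm * Jm) * Jp by noncomm_ring, hJm]
    rw [show Jp * (-1 : Module.End ℝ V) * Jp = -(Jp * Jp) by noncomm_ring, hJp]
    simp
  have hBA : (Jm * Jp) * (Jp * Jm) = 1 := by
    rw [show (Jm * Jp) * (Jp * Jm) = Jm * (Jp * Jp) * Jm by noncomm_ring, hJp]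
    rw [show Jm * (-1 : Module.End ℝ V) * Jm = -(Jm * Jm) by noncomm_ring, hJm]
    simp
  -- (A-B)² = 4(p²-1)
  have hcomm2 : (Jp * Jm - Jm * Jp) * (Jp * Jm - Jm * Jp)
      = (4 * (p ^ 2 - 1)) • (1 : Module.End ℝ V) := by
    have e : (Jp * Jm - Jm * Jp) * (Jp * Jm - Jm * Jp)
        = (Jp * Jm) * (Jp * Jm) + (Jm * Jp) * (Jm * Jp)
          - (Jp * Jm) * (Jm * Jp) - (Jm * Jp) * (Jp * Jm) := by noncomm_ring
    rw [e, hA, hB, hAB, hBA, h1]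
    rw [show ((2:ℝ) * p) • ((2 * p) • (1 : Module.End ℝ V) - Jp * Jm)
        = (4 * p ^ 2) • (1 : Module.End ℝ V) - (2 * p) • (Jp * Jm) by
      rw [smul_sub, smul_smul]; ring_nf]
    module
  have hKK : K * K = 1 := by
    show ((1 / (2 * q)) • (Jp * Jm - Jm * Jp)) * ((1 / (2 * q)) • (Jp * Jm - Jm * Jp)) = 1
    rw [smul_mul_assoc, mul_smul_comm, hcomm2, smul_smul, smul_smul]
    rw [show 1 / (2 * q) * (1 / (2 * q)) * (4 * (p ^ 2 - 1)) = 1 by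
      field_simp; nlinarith [hq]]
    simp
  -- (Jm + p Jp)² = (p²-1)
  have hS2 : (Jm + p • Jp) * (Jm + p • Jp) = (p ^ 2 - 1) • (1 : Module.End ℝ V) := by
    have e : (Jm + p • Jp) * (Jm + p • Jp)
        = Jm * Jm + p • (Jm * Jp + Jp * Jm) + (p * p) • (Jp * Jp) := by
      simp only [add_mul, mul_add, smul_mul_assoc, mul_smul_comm, smul_smul, smul_add]
      abel
    rw [e, hJm, hJp, show Jm * Jp + Jp * Jm = (2 * p) • (1 : Module.End ℝ V) by
      rw [add_comm]; exact hanti]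
    rw [smul_smul]
    module
  have hSS : S * S = 1 := by
    show (-((1 / q) • (Jm + p • Jp))) * (-((1 / q) • (Jm + p • Jp))) = 1
    rw [neg_mul_neg, smul_mul_assoc, mul_smul_comm, hS2, smul_smul, smul_smul]
    rw [show 1 / q * (1 / q) * (p ^ 2 - 1) = 1 by field_simp; nlinarith [hq]]
    simp
  -- Jp (A - B) = -2(Jm + p Jp)
  have hJpc : Jp * (Jp * Jm - Jm * Jp) = (-2 : ℝ) • (Jm + p • Jp) := by
    have e : Jp * (Jp * Jm - Jm * Jp) = (Jp * Jp) * Jm - (Jp * Jm) * Jp := by noncomm_ring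
    rw [e, hJp,
      show Jp * Jm = (2 * p) • (1 : Module.End ℝ V) - Jm * Jp from eq_sub_of_add_eq hanti,
      sub_mul, smul_mul_assoc, one_mul,
      show Jm * Jp * Jp = Jm * (Jp * Jp) by noncomm_ring, hJp]
    simp only [neg_one_mul, mul_neg_one, one_mul, mul_one]
    module
  have hcJp : (Jp * Jm - Jm * Jp) * Jp = (2 : ℝ) • (Jm + p • Jp) := by
    have e : (Jp * Jm - Jm * Jp) * Jp = Jp * (Jm * Jp) - Jm * (Jp * Jp) := by noncomm_ring
    rw [e, h1, hJp, mul_sub, mul_smul_comm, mul_one,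
      show Jp * (Jp * Jm) = (Jp * Jp) * Jm by noncomm_ring, hJp]
    simp only [neg_one_mul, mul_neg_one, one_mul, mul_one]
    module
  have hJpK : Jp * K = S := by
    show Jp * ((1 / (2 * q)) • (Jp * Jm - Jm * Jp)) = -((1 / q) • (Jm + p • Jp))
    rw [mul_smul_comm, hJpc, smul_smul]
    rw [show 1 / (2 * q) * (-2) = -(1 / q) by field_simp]
    module
  have hKJp : K * Jp = -S := by
    show ((1 / (2 * q)) • (Jp * Jm - Jm * Jp)) * Jp = -(-((1 / q) • (Jm + p • Jp)))
    rw [smul_mul_assoc, hcJp, smul_smul]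
    rw [show 1 / (2 * q) * 2 = 1 / q by field_simp]
    module
  exact ⟨hJp, hKK, hSS, hJpK, hKJp⟩
end

section
/- Let V be a real vector space with nondegenerate symmetric bilinear form g, and J₊, J₋ two g-compatible complex structures with J₊J₋ + J₋J₊ = 2p·Id where p > 1 (constant). Then the ±1-eigenspaces of K = [J₊,J₋]/(2√(p²-1)) consist of g-isotropic vectors; equivalently, g(KX,Y) = -g(X,KY) for all X,Y, and hence g(X,X) = 0 for any X with KX = ±X. -/
theorem stmt6 (V : Type*) [AddCommGroup V] [Module ℝ V]
    (g : LinearMap.BilinForm ℝ V)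
    (hsymm : ∀ x y, g x y = g y x)
    (hnd : ∀ x, (∀ y, g x y = 0) → x = 0)
    (Jp Jm : Module.End ℝ V)
    (hJp : Jp * Jp = -1) (hJm : Jm * Jm = -1)
    (hgp : ∀ x y, g (Jp x) (Jp y) = g x y) (hgm : ∀ x y, g (Jm x) (Jm y) = g x y)
    (p : ℝ) (hp : 1 < p)
    (hanti : Jp * Jm + Jm * Jp = (2 * p) • (1 : Module.End ℝ V)) :
    let K : Module.End ℝ V := (1 / (2 * Real.sqrt (p ^ 2 - 1))) • (Jp * Jm - Jm * Jp)
    (∀ x y, g (K x) y = - g x (K y)) ∧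
      (∀ x, (K x = x ∨ K x = -x) → g x x = 0) := by
  intro K
  have hJp2 : ∀ y, Jp (Jp y) = -y := by
    intro y
    have := congrArg (fun f : Module.End ℝ V => f y) hJp
    simpa [Module.End.mul_apply] using this
  have hJm2 : ∀ y, Jm (Jm y) = -y := by
    intro y
    have := congrArg (fun f : Module.End ℝ V => f y) hJm
    simpa [Module.End.mul_apply] using this
  have hp' : ∀ x y, g (Jp x) y = - g x (Jp y) := by
    intro x y
    have := hgp x (Jp y)
    rw [hJp2 y] at this
    simp only [map_neg] at this; linarith [this]
  have hm' : ∀ x y, g (Jm x) y = - g x (Jm y) := by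
    intro x y
    have := hgm x (Jm y)
    rw [hJm2 y] at this
    simp only [map_neg] at this; linarith [this]
  have hK : ∀ x y, g (K x) y = - g x (K y) := by
    intro x y
    have h1 : g (Jp (Jm x)) y = g x (Jm (Jp y)) := by
      rw [hp', hm']; ring
    have h2 : g (Jm (Jp x)) y = g x (Jp (Jm y)) := by
      rw [hm', hp']; ring
    simp only [K, LinearMap.smul_apply, LinearMap.sub_apply, Module.End.mul_apply,
      map_smul, map_sub, LinearMap.smul_apply, LinearMap.sub_apply, smul_eq_mul]
    rw [h1, h2]
    ring
  refine ⟨hK, ?_⟩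
  intro x hx
  have key : g x x = - g x x := by
    rcases hx with h | h
    · calc g x x = g (K x) x := by rw [h]
      _ = - g x (K x) := hK x x
      _ = - g x x := by rw [h]
    · calc g x x = - g (K x) x := by rw [h]; simp
      _ = g x (K x) := by rw [hK]; ring
      _ = - g x x := by rw [h]; simp
  linarith
end

section
/- Under the same hypotheses (J±² = -Id, J₊J₋ + J₋J₊ = 2p·Id, p > 1, dim V = 4, K = [J₊,J₋]/(2√(p²-1)), N± = J₊ + (p ± √(p²-1))J₋), one has Ker N₊ ∩ Ker N₋ = {0}, each N± has kernel of dimension exactly 2, and Ker N± = Im N± = (∓1)-eigenspace of K. -/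
open Module

theorem stmt8 (V : Type*) [AddCommGroup V] [Module ℝ V] [FiniteDimensional ℝ V]
    (hdim : finrank ℝ V = 4)
    (Jp Jm : Module.End ℝ V)
    (hJp : Jp * Jp = -1) (hJm : Jm * Jm = -1)
    (p : ℝ) (hp : 1 < p)
    (hanti : Jp * Jm + Jm * Jp = (2 * p) • (1 : Module.End ℝ V)) :
    let K : Module.End ℝ V := (1 / (2 * Real.sqrt (p ^ 2 - 1))) • (Jp * Jm - Jm * Jp)
    let Np : Module.End ℝ V := Jp + (p + Real.sqrt (p ^ 2 - 1)) • Jm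
    let Nm : Module.End ℝ V := Jp + (p - Real.sqrt (p ^ 2 - 1)) • Jm
    LinearMap.ker Np ⊓ LinearMap.ker Nm = ⊥ ∧
    finrank ℝ (LinearMap.ker Np) = 2 ∧ finrank ℝ (LinearMap.ker Nm) = 2 ∧
    LinearMap.ker Np = LinearMap.range Np ∧ LinearMap.ker Nm = LinearMap.range Nm ∧
    LinearMap.ker Np = LinearMap.ker (K + 1) ∧
    LinearMap.ker Nm = LinearMap.ker (K - 1) := by
  intro K Np Nm
  have hp2 : (0:ℝ) < p ^ 2 - 1 := by nlinarith
  have hs2 : Real.sqrt (p ^ 2 - 1) ^ 2 = p ^ 2 - 1 := Real.sq_sqrt hp2.le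
  have hs0 : 0 < Real.sqrt (p ^ 2 - 1) := Real.sqrt_pos.mpr hp2
  set s := Real.sqrt (p ^ 2 - 1) with hsdef
  have hK : K = (1 / (2 * s)) • (Jp * Jm - Jm * Jp) := rfl
  have hNpd : Np = Jp + (p + s) • Jm := rfl
  have hNmd : Nm = Jp + (p - s) • Jm := rfl
  have hJmJp : Jm * Jp = (2 * p) • (1 : Module.End ℝ V) - Jp * Jm := by
    rw [← hanti]; abel
  -- key products
  have hNp2 : Np * Np = 0 := by
    rw [hNpd]
    simp only [mul_add, add_mul, smul_mul_assoc, mul_smul_comm, hJp, hJm, hJmJp, smul_smul,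
      smul_sub, smul_add]
    match_scalars <;> linarith [hs2]
  have hNm2 : Nm * Nm = 0 := by
    rw [hNmd]
    simp only [mul_add, add_mul, smul_mul_assoc, mul_smul_comm, hJp, hJm, hJmJp, smul_smul,
      smul_sub, smul_add]
    match_scalars <;> linarith [hs2]
  have hNmNp : Nm * Np = (2 * s ^ 2) • (K + 1) := by
    rw [hNmd, hNpd, hK]
    simp only [mul_add, add_mul, smul_mul_assoc, mul_smul_comm, hJp, hJm, hJmJp, smul_smul,
      smul_sub, smul_add]
    match_scalars <;> field_simp <;> nlinarith [hs2, hs0]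
  have hNpNm : Np * Nm = (-(2 * s ^ 2)) • (K - 1) := by
    rw [hNmd, hNpd, hK]
    simp only [mul_add, add_mul, smul_mul_assoc, mul_smul_comm, hJp, hJm, hJmJp, smul_smul,
      smul_sub, smul_add]
    match_scalars <;> field_simp <;> nlinarith [hs2, hs0]
  have h2s2 : (2 * s ^ 2 : ℝ) ≠ 0 := by positivity
  -- intersection is trivial
  have hinter : LinearMap.ker Np ⊓ LinearMap.ker Nm = ⊥ := by
    rw [Submodule.eq_bot_iff]
    rintro v ⟨hv1, hv2⟩
    rw [SetLike.mem_coe, LinearMap.mem_ker] at hv1 hv2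
    have hdiff : Np - Nm = (2 * s) • Jm := by
      rw [hNpd, hNmd]; match_scalars <;> ring
    have hJmv : Jm v = 0 := by
      have h : (Np - Nm) v = 0 := by simp [LinearMap.sub_apply, hv1, hv2]
      rw [hdiff, LinearMap.smul_apply] at h
      rcases smul_eq_zero.mp h with h | h
      · exact absurd h (by positivity)
      · exact h
    have : (Jm * Jm) v = (-1 : Module.End ℝ V) v := by rw [hJm]
    simpa [Module.End.mul_apply, hJmv, eq_comm, neg_eq_zero] using this
  -- range ⊆ ker
  have hrkp : LinearMap.range Np ≤ LinearMap.ker Np := by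
    rintro _ ⟨v, rfl⟩
    rw [LinearMap.mem_ker]
    have : (Np * Np) v = (0 : Module.End ℝ V) v := by rw [hNp2]
    simpa [Module.End.mul_apply] using this
  have hrkm : LinearMap.range Nm ≤ LinearMap.ker Nm := by
    rintro _ ⟨v, rfl⟩
    rw [LinearMap.mem_ker]
    have : (Nm * Nm) v = (0 : Module.End ℝ V) v := by rw [hNm2]
    simpa [Module.End.mul_apply] using this
  -- dimensions
  have hrnp := LinearMap.finrank_range_add_finrank_ker Np
  have hrnm := LinearMap.finrank_range_add_finrank_ker Nm
  rw [hdim] at hrnp hrnm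
  have hlep : finrank ℝ (LinearMap.range Np) ≤ finrank ℝ (LinearMap.ker Np) :=
    Submodule.finrank_mono hrkp
  have hlem : finrank ℝ (LinearMap.range Nm) ≤ finrank ℝ (LinearMap.ker Nm) :=
    Submodule.finrank_mono hrkm
  have hsum := Submodule.finrank_sup_add_finrank_inf_eq (LinearMap.ker Np) (LinearMap.ker Nm)
  rw [hinter, finrank_bot] at hsum
  have hsuple : finrank ℝ ↥(LinearMap.ker Np ⊔ LinearMap.ker Nm) ≤ 4 := by
    rw [← hdim]; exact Submodule.finrank_le _
  have hkp2 : finrank ℝ (LinearMap.ker Np) = 2 := by omega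
  have hkm2 : finrank ℝ (LinearMap.ker Nm) = 2 := by omega
  have hkrp : LinearMap.ker Np = LinearMap.range Np :=
    (Submodule.eq_of_le_of_finrank_le hrkp (by omega)).symm
  have hkrm : LinearMap.ker Nm = LinearMap.range Nm :=
    (Submodule.eq_of_le_of_finrank_le hrkm (by omega)).symm
  -- eigenspace identifications
  have hkerKp : LinearMap.ker Np = LinearMap.ker (K + 1) := by
    ext v
    simp only [LinearMap.mem_ker]
    constructor
    · intro hv
      have h := LinearMap.congr_fun hNmNp v
      rw [Module.End.mul_apply, hv, map_zero, LinearMap.smul_apply] at h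
      rcases smul_eq_zero.mp h.symm with h | h
      · exact absurd h h2s2
      · exact h
    · intro hv
      have hKv : K v = -v := by
        have h : K v + v = 0 := by
          have := hv
          rwa [LinearMap.add_apply, Module.End.one_apply] at this
        exact eq_neg_of_add_eq_zero_left h
      have h1 : (Np * Nm) v = (4 * s ^ 2) • v := by
        rw [hNpNm, LinearMap.smul_apply, LinearMap.sub_apply, Module.End.one_apply, hKv]
        module
      have h2 : Np ((Np * Nm) v) = 0 := by
        have h3 : Np * (Np * Nm) = 0 := by rw [← mul_assoc, hNp2, zero_mul]
        have := LinearMap.congr_fun h3 v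
        simpa [Module.End.mul_apply] using this
      rw [h1, map_smul] at h2
      rcases smul_eq_zero.mp h2 with h | h
      · exact absurd h (by positivity)
      · exact h
  have hkerKm : LinearMap.ker Nm = LinearMap.ker (K - 1) := by
    ext v
    simp only [LinearMap.mem_ker]
    constructor
    · intro hv
      have h := LinearMap.congr_fun hNpNm v
      rw [Module.End.mul_apply, hv, map_zero, LinearMap.smul_apply] at h
      rcases smul_eq_zero.mp h.symm with h | h
      · exact absurd h (by simpa using h2s2)
      · exact h
    · intro hv
      have hKv : K v = v := by
        have h : K v - v = 0 := by
          have := hv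
          rwa [LinearMap.sub_apply, Module.End.one_apply] at this
        exact sub_eq_zero.mp h
      have h1 : (Nm * Np) v = (4 * s ^ 2) • v := by
        rw [hNmNp, LinearMap.smul_apply, LinearMap.add_apply, Module.End.one_apply, hKv]
        module
      have h2 : Nm ((Nm * Np) v) = 0 := by
        have h3 : Nm * (Nm * Np) = 0 := by rw [← mul_assoc, hNm2, zero_mul]
        have := LinearMap.congr_fun h3 v
        simpa [Module.End.mul_apply] using this
      rw [h1, map_smul] at h2
      rcases smul_eq_zero.mp h2 with h | h
      · exact absurd h (by positivity)
      · exact h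
  exact ⟨hinter, hkp2, hkm2, hkrp, hkrm, hkerKp, hkerKm⟩
end

section
/- Let Π be a holomorphic bivector field (holomorphic section of Λ²T^{1,0}) on a complex manifold, and write Π = Re Π + i Im Π. If the Schouten–Nijenhuis bracket [Re Π, Re Π] = 0, then [Im Π, Im Π] = 0 and [Π, Π] = 2i[Re Π, Im Π]; since [Π,Π] is of type (3,0) while 2i[ReΠ, ImΠ] is purely imaginary (conjugate equal to its negative), it follows that [Π, Π] = 0, i.e. Π is a holomorphic Poisson structure. -/
/-- Abstract formalization of the Schouten-bracket argument:  `W` is the space of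
(complexified) bivector fields, `W'` that of 3-vector fields, each with a conjugation
(an ℝ-linear involution anticommuting with `i`), and `Br` the Schouten–Nijenhuis bracket,
which is symmetric, ℂ-bilinear and conjugation-equivariant.  `P = R + iI` is a holomorphic
bivector, so `[P̄, P] = 0`; `S` is the submodule of `(3,0)`-vectors, which meets its
conjugate (the `(0,3)`-vectors) trivially, and `[P,P]` is of type `(3,0)`.
If `[R,R] = 0` then `[I,I] = 0`, `[P,P] = 2i[R,I]`, and `[P,P] = 0`. -/
theorem stmt12 (W W' : Type*) [AddCommGroup W] [Module ℂ W] [AddCommGroup W'] [Module ℂ W']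
    (conj : W →ₗ[ℝ] W) (conj' : W' →ₗ[ℝ] W')
    (hconjI : ∀ x, conj (Complex.I • x) = -(Complex.I • conj x))
    (hconj'I : ∀ x, conj' (Complex.I • x) = -(Complex.I • conj' x))
    (hconj2 : ∀ x, conj (conj x) = x) (hconj'2 : ∀ x, conj' (conj' x) = x)
    (Br : W →ₗ[ℝ] W →ₗ[ℝ] W')
    (hBrC : ∀ x y, Br (Complex.I • x) y = Complex.I • Br x y)
    (hBrsymm : ∀ x y, Br x y = Br y x)
    (hconjBr : ∀ x y, conj' (Br x y) = Br (conj x) (conj y))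
    (P R I : W)
    (hR : R = ((2 : ℂ)⁻¹) • (P + conj P))
    (hI : Complex.I • I = ((2 : ℂ)⁻¹) • (P - conj P))
    (hhol : Br (conj P) P = 0)
    (S : Submodule ℝ W') (h30 : Br P P ∈ S)
    (hS : S ⊓ S.map conj' = ⊥)
    (hRR : Br R R = 0) :
    Br I I = 0 ∧ Br P P = (2 * Complex.I) • Br R I ∧ Br P P = 0 := by
  have hB2 : ∀ x y, Br x (Complex.I • y) = Complex.I • Br x y := fun x y => by
    rw [hBrsymm, hBrC, hBrsymm]
  have hP : P = R + Complex.I • I := by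
    rw [hR, hI]; module
  have hQ : conj P = R - Complex.I • I := by
    rw [hR, hI]; module
  have hIR : Br I R = Br R I := hBrsymm I R
  set J := Complex.I • I with hJ
  have hBrJ : ∀ x, Br x J = Complex.I • Br x I := fun x => hB2 x I
  have hJBr : ∀ x, Br J x = Complex.I • Br I x := fun x => hBrC I x
  have hJJ : Br J J = - Br I I := by
    rw [hJ, hBrC, hB2, smul_smul, Complex.I_mul_I, neg_one_smul]
  have e1 : Br (conj P) P = Br R R + Br I I := by
    rw [hQ, hP]
    simp only [map_sub, map_add, LinearMap.sub_apply, LinearMap.add_apply]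
    rw [hBrJ R, hJBr R, hJJ, hIR]
    abel
  have hII : Br I I = 0 := by
    have := e1
    rw [hhol, hRR, zero_add] at this
    exact this.symm
  have e2 : Br P P = (2 * Complex.I) • Br R I := by
    rw [hP]
    simp only [map_add, LinearMap.add_apply]
    rw [hBrJ R, hJBr R, hJJ, hIR, hRR, hII, neg_zero, add_zero, zero_add,
      ← two_smul ℂ, smul_smul]
  have e3 : conj' (Br P P) = - Br P P := by
    rw [hconjBr, hQ]
    simp only [map_sub, LinearMap.sub_apply]
    rw [hBrJ R, hJBr R, hJJ, hIR, hRR, hII, neg_zero, sub_zero, zero_sub, e2,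
      two_mul, add_smul]
    abel
  have hmem : conj' (Br P P) ∈ S ⊓ S.map conj' := by
    constructor
    · rw [e3]; exact S.neg_mem h30
    · exact Submodule.mem_map_of_mem h30
  rw [hS] at hmem
  have h0 : conj' (Br P P) = 0 := hmem
  have hz : Br P P = 0 := by
    have := congrArg conj' h0
    rw [hconj'2, map_zero] at this
    exact this
  exact ⟨hII, e2, hz⟩
end

section
/- Let (V,g) be a 4-dimensional vector space with a neutral inner product, {J₊, K, S₊} a para-hyperhermitian triple (J₊²=-Id, K²=S₊²=Id, S₊=J₊K, g(J₊·,J₊·)=g, g(K·,K·)=g(S₊·,S₊·)=-g), and J₋ with J₊J₋+J₋J₊=-2a·Id, a>1, J₋ = aJ₊ - √(a²-1) S₊. Define ω₊(X,Y)=√((a+1)/(a-1))·g(J₊X - J₋X, Y), ω₋(X,Y)=√((a-1)/(a+1))·g(J₊X + J₋X, Y), F^K(X,Y)=g(KX,Y). Then for any X with g(X,X)=1, evaluating on the basis {X, J₊X, KX, S₊X}: ω±(X,J₊X) = ∓√(a²-1), ω±(X,KX) = 0, ω±(X,S₊X) = ∓(a±1), and hence F^K∧ω₊ = F^K∧ω₋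 = ω₊∧ω₋ = 0 and ω₊² + ω₋² = 4(F^K)². -/
/-!
Write `F^T(x, y) = g(T x, y)` for the fundamental form of `T`. Unwinding `J₋ = a J₊ - √(a²-1) S₊`
gives `ω₊ = -√(a²-1) F^{J₊} + (a+1) F^{S₊}` and `ω₋ = √(a²-1) F^{J₊} - (a-1) F^{S₊}`, so the
evaluations follow from the orthogonality of `X, J₊X, KX, S₊X`, and the wedge identities reduce by
bilinearity to wedge products of `F^{J₊}, F^K, F^{S₊}`. In the frame `X, J₊X, KX, S₊X` of a unit
vector these three forms have constant coefficients, which gives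
`F^K ∧ F^{J₊} = F^K ∧ F^{S₊} = F^{J₊} ∧ F^{S₊} = 0` and
`F^{J₊} ∧ F^{J₊} = -F^K ∧ F^K = -F^{S₊} ∧ F^{S₊}`; the remaining identities then only use
`(√(a²-1))² = a² - 1`.
-/

open Module

/-- Wedge product of two 2-forms evaluated on four vectors. -/
def wedge2 {V : Type*} (α β : V → V → ℝ) (x₁ x₂ x₃ x₄ : V) : ℝ :=
  α x₁ x₂ * β x₃ x₄ - α x₁ x₃ * β x₂ x₄ + α x₁ x₄ * β x₂ x₃ +
    α x₃ x₄ * β x₁ x₂ - α x₂ x₄ * β x₁ x₃ + α x₂ x₃ * β x₁ x₄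

theorem Real.sqrt_div_mul_self_of_pos {x y : ℝ} (hy : 0 < y) : √(x / y) * y = √(x * y) := by
  rw [← Real.sqrt_sq hy.le, ← Real.sqrt_mul' _ (sq_nonneg y), Real.sqrt_sq hy.le]
  field_simp

theorem Real.sqrt_div_mul_sqrt_mul {x y : ℝ} (hx : 0 ≤ x) (hy : 0 < y) :
    √(x / y) * √(x * y) = x := by
  rw [← Real.sqrt_mul (div_nonneg hx hy.le), show x / y * (x * y) = x ^ 2 by field_simp,
    Real.sqrt_sq hx]

section wedge2

variable {V : Type*} (α α' β β' : V → V → ℝ) (c : ℝ) (x₁ x₂ x₃ x₄ : V)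

theorem wedge2_comm : wedge2 α β x₁ x₂ x₃ x₄ = wedge2 β α x₁ x₂ x₃ x₄ := by
  unfold wedge2; ring

theorem wedge2_add_left :
    wedge2 (α + α') β x₁ x₂ x₃ x₄ = wedge2 α β x₁ x₂ x₃ x₄ + wedge2 α' β x₁ x₂ x₃ x₄ := by
  simp only [wedge2, Pi.add_apply]; ring

theorem wedge2_smul_left : wedge2 (c • α) β x₁ x₂ x₃ x₄ = c * wedge2 α β x₁ x₂ x₃ x₄ := by
  simp only [wedge2, Pi.smul_apply, smul_eq_mul]; ring

theorem wedge2_add_right :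
    wedge2 α (β + β') x₁ x₂ x₃ x₄ = wedge2 α β x₁ x₂ x₃ x₄ + wedge2 α β' x₁ x₂ x₃ x₄ := by
  rw [wedge2_comm, wedge2_add_left, wedge2_comm α, wedge2_comm α]

theorem wedge2_smul_right : wedge2 α (c • β) x₁ x₂ x₃ x₄ = c * wedge2 α β x₁ x₂ x₃ x₄ := by
  rw [wedge2_comm, wedge2_smul_left, wedge2_comm]

end wedge2

namespace LinearMap.BilinForm

variable {𝕜 V : Type*} [Field 𝕜] [AddCommGroup V] [Module 𝕜 V] {g : LinearMap.BilinForm 𝕜 V}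
  {T : Module.End 𝕜 V}

theorem apply_eq_neg_apply_of_apply_apply {ε : 𝕜} (hε : ε ≠ 0) (hT : ∀ x, T (T x) = ε • x)
    (hg : ∀ x y, g (T x) (T y) = -ε * g x y) (x y : V) : g (T x) y = -g x (T y) := by
  have h := hg x (T y)
  rw [hT, map_smul, smul_eq_mul] at h
  exact mul_left_cancel₀ hε (by rw [h]; ring)

theorem apply_self_eq_zero_of_skew [CharZero 𝕜] (hsymm : ∀ x y, g x y = g y x)
    (hskew : ∀ x y, g (T x) y = -g x (T y)) (x : V) : g (T x) x = 0 := by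
  have h := hskew x x
  rw [hsymm x] at h
  exact CharZero.eq_neg_self_iff.mp h

end LinearMap.BilinForm

structure IsParaHyperhermitian {V : Type*} [AddCommGroup V] [Module ℝ V]
    (g : LinearMap.BilinForm ℝ V) (J K S : Module.End ℝ V) : Prop where
  symm : ∀ x y, g x y = g y x
  J_mul_J : J * J = -1
  K_mul_K : K * K = 1
  S_mul_S : S * S = 1
  J_mul_K : J * K = S
  K_mul_J : K * J = -S
  isometry_J : ∀ x y, g (J x) (J y) = g x y
  antiIsometry_K : ∀ x y, g (K x) (K y) = -g x y
  antiIsometry_S : ∀ x y, g (S x) (S y) = -g x y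

def fundamentalForm {V : Type*} [AddCommGroup V] [Module ℝ V] (g : LinearMap.BilinForm ℝ V)
    (T : Module.End ℝ V) : V → V → ℝ :=
  fun x y => g (T x) y

def adaptedFrame {V : Type*} [AddCommGroup V] [Module ℝ V] (J K S : Module.End ℝ V) (X : V) :
    Fin 4 → V :=
  ![X, J X, K X, S X]

namespace IsParaHyperhermitian

variable {V : Type*} [AddCommGroup V] [Module ℝ V] {g : LinearMap.BilinForm ℝ V}
  {J K S : Module.End ℝ V}

theorem J_mul_S (h : IsParaHyperhermitian g J K S) : J * S = -K := by
  rw [← h.J_mul_K, ← mul_assoc, h.J_mul_J, neg_one_mul]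

theorem S_mul_J (h : IsParaHyperhermitian g J K S) : S * J = K := by
  rw [← h.J_mul_K, mul_assoc, h.K_mul_J, mul_neg, h.J_mul_S, neg_neg]

theorem J_J (h : IsParaHyperhermitian g J K S) (x : V) : J (J x) = -x := by
  simpa using LinearMap.congr_fun h.J_mul_J x

theorem K_K (h : IsParaHyperhermitian g J K S) (x : V) : K (K x) = x := by
  simpa using LinearMap.congr_fun h.K_mul_K x

theorem S_S (h : IsParaHyperhermitian g J K S) (x : V) : S (S x) = x := by
  simpa using LinearMap.congr_fun h.S_mul_S x

theorem J_K (h : IsParaHyperhermitian g J K S) (x : V) : J (K x) = S x := by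
  simpa using LinearMap.congr_fun h.J_mul_K x

theorem K_J (h : IsParaHyperhermitian g J K S) (x : V) : K (J x) = -S x := by
  simpa using LinearMap.congr_fun h.K_mul_J x

theorem J_S (h : IsParaHyperhermitian g J K S) (x : V) : J (S x) = -K x := by
  simpa using LinearMap.congr_fun h.J_mul_S x

theorem S_J (h : IsParaHyperhermitian g J K S) (x : V) : S (J x) = K x := by
  simpa using LinearMap.congr_fun h.S_mul_J x

theorem S_K (h : IsParaHyperhermitian g J K S) (x : V) : S (K x) = J x := by
  rw [← h.J_K, h.K_K]

theorem K_S (h : IsParaHyperhermitian g J K S) (x : V) : K (S x) = -J x := by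
  rw [← h.S_J, h.J_S, map_neg, h.S_K]

theorem skew_J (h : IsParaHyperhermitian g J K S) (x y : V) : g (J x) y = -g x (J y) :=
  LinearMap.BilinForm.apply_eq_neg_apply_of_apply_apply (ε := -1) (by norm_num)
    (fun x => by rw [h.J_J, neg_one_smul]) (fun x y => by rw [h.isometry_J, neg_neg, one_mul]) x y

theorem skew_K (h : IsParaHyperhermitian g J K S) (x y : V) : g (K x) y = -g x (K y) :=
  LinearMap.BilinForm.apply_eq_neg_apply_of_apply_apply (ε := 1) one_ne_zero
    (fun x => by rw [h.K_K, one_smul]) (fun x y => by rw [h.antiIsometry_K, neg_one_mul]) x y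

theorem skew_S (h : IsParaHyperhermitian g J K S) (x y : V) : g (S x) y = -g x (S y) :=
  LinearMap.BilinForm.apply_eq_neg_apply_of_apply_apply (ε := 1) one_ne_zero
    (fun x => by rw [h.S_S, one_smul]) (fun x y => by rw [h.antiIsometry_S, neg_one_mul]) x y

theorem J_apply_self (h : IsParaHyperhermitian g J K S) (x : V) : g (J x) x = 0 :=
  LinearMap.BilinForm.apply_self_eq_zero_of_skew h.symm h.skew_J x

theorem K_apply_self (h : IsParaHyperhermitian g J K S) (x : V) : g (K x) x = 0 :=
  LinearMap.BilinForm.apply_self_eq_zero_of_skew h.symm h.skew_K x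

theorem S_apply_self (h : IsParaHyperhermitian g J K S) (x : V) : g (S x) x = 0 :=
  LinearMap.BilinForm.apply_self_eq_zero_of_skew h.symm h.skew_S x

theorem J_apply_K (h : IsParaHyperhermitian g J K S) (x : V) : g (J x) (K x) = 0 := by
  rw [h.skew_J, h.J_K, h.symm, h.S_apply_self, neg_zero]

theorem J_apply_S (h : IsParaHyperhermitian g J K S) (x : V) : g (J x) (S x) = 0 := by
  rw [h.skew_J, h.J_S, map_neg, h.symm, h.K_apply_self, neg_zero, neg_zero]

theorem K_apply_S (h : IsParaHyperhermitian g J K S) (x : V) : g (K x) (S x) = 0 := by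
  rw [h.skew_K, h.K_S, map_neg, h.symm, h.J_apply_self, neg_zero, neg_zero]

theorem gram_adaptedFrame (h : IsParaHyperhermitian g J K S) (X : V) (i j : Fin 4) :
    g (adaptedFrame J K S X i) (adaptedFrame J K S X j) =
      if i = j then ![1, 1, -1, -1] i * g X X else 0 := by
  fin_cases i <;> fin_cases j <;>
    simp [adaptedFrame, h.isometry_J, h.antiIsometry_K, h.antiIsometry_S, h.J_apply_self,
      h.K_apply_self, h.S_apply_self, h.J_apply_K, h.J_apply_S, h.K_apply_S, h.symm X (J X),
      h.symm X (K X), h.symm X (S X), h.symm (K X) (J X), h.symm (S X) (J X),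
      h.symm (S X) (K X)]

theorem linearIndependent_adaptedFrame (h : IsParaHyperhermitian g J K S) {X : V}
    (hX : g X X ≠ 0) : LinearIndependent ℝ (adaptedFrame J K S X) := by
  refine LinearMap.BilinForm.linearIndependent_of_iIsOrtho (B := g)
    (LinearMap.BilinForm.iIsOrtho_def.2 fun i j hij => ?_) fun i => ?_
  · simp [h.gram_adaptedFrame, hij]
  · fin_cases i <;> simp [h.gram_adaptedFrame, hX]

theorem exists_adaptedFrame_coords (h : IsParaHyperhermitian g J K S) (hdim : finrank ℝ V = 4)
    {X : V} (hX : g X X ≠ 0) (x : V) : ∃ u : Fin 4 → ℝ, ∑ i, u i • adaptedFrame J K S X i = x := by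
  rw [← Submodule.mem_span_range_iff_exists_fun,
    (h.linearIndependent_adaptedFrame hX).span_eq_top_of_card_eq_finrank (by simp [hdim])]
  exact Submodule.mem_top

theorem apply_sum_adaptedFrame (h : IsParaHyperhermitian g J K S) {X : V} (hX : g X X = 1)
    (u v : Fin 4 → ℝ) :
    g (∑ i, u i • adaptedFrame J K S X i) (∑ i, v i • adaptedFrame J K S X i) =
      u 0 * v 0 + u 1 * v 1 - u 2 * v 2 - u 3 * v 3 := by
  simp only [LinearMap.BilinForm.sum_left, LinearMap.BilinForm.sum_right,
    LinearMap.BilinForm.smul_left, LinearMap.BilinForm.smul_right, h.gram_adaptedFrame, hX,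
    mul_ite, mul_zero, Finset.sum_ite_eq', Finset.mem_univ, if_true]
  simp only [Fin.sum_univ_four, Matrix.cons_val]
  ring

theorem J_sum_adaptedFrame (h : IsParaHyperhermitian g J K S) (X : V) (u : Fin 4 → ℝ) :
    J (∑ i, u i • adaptedFrame J K S X i) =
      ∑ i, ![-u 1, u 0, -u 3, u 2] i • adaptedFrame J K S X i := by
  simp only [adaptedFrame, Fin.sum_univ_four, Matrix.cons_val, map_add, map_smul,
    h.J_J, h.J_K, h.J_S]
  module

theorem K_sum_adaptedFrame (h : IsParaHyperhermitian g J K S) (X : V) (u : Fin 4 → ℝ) :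
    K (∑ i, u i • adaptedFrame J K S X i) =
      ∑ i, ![u 2, -u 3, u 0, -u 1] i • adaptedFrame J K S X i := by
  simp only [adaptedFrame, Fin.sum_univ_four, Matrix.cons_val, map_add, map_smul,
    h.K_J, h.K_K, h.K_S]
  module

theorem S_sum_adaptedFrame (h : IsParaHyperhermitian g J K S) (X : V) (u : Fin 4 → ℝ) :
    S (∑ i, u i • adaptedFrame J K S X i) =
      ∑ i, ![u 3, u 2, u 1, u 0] i • adaptedFrame J K S X i := by
  simp only [adaptedFrame, Fin.sum_univ_four, Matrix.cons_val, map_add, map_smul,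
    h.S_J, h.S_K, h.S_S]
  module

theorem wedge2_fundamentalForm_relations (h : IsParaHyperhermitian g J K S)
    (hdim : finrank ℝ V = 4) {X : V} (hX : g X X = 1) (x₁ x₂ x₃ x₄ : V) :
    wedge2 (fundamentalForm g K) (fundamentalForm g J) x₁ x₂ x₃ x₄ = 0 ∧
    wedge2 (fundamentalForm g K) (fundamentalForm g S) x₁ x₂ x₃ x₄ = 0 ∧
    wedge2 (fundamentalForm g J) (fundamentalForm g S) x₁ x₂ x₃ x₄ = 0 ∧
    wedge2 (fundamentalForm g J) (fundamentalForm g J) x₁ x₂ x₃ x₄ =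
      -wedge2 (fundamentalForm g K) (fundamentalForm g K) x₁ x₂ x₃ x₄ ∧
    wedge2 (fundamentalForm g S) (fundamentalForm g S) x₁ x₂ x₃ x₄ =
      wedge2 (fundamentalForm g K) (fundamentalForm g K) x₁ x₂ x₃ x₄ := by
  have hX₀ : g X X ≠ 0 := by rw [hX]; exact one_ne_zero
  obtain ⟨u₁, rfl⟩ := h.exists_adaptedFrame_coords hdim hX₀ x₁
  obtain ⟨u₂, rfl⟩ := h.exists_adaptedFrame_coords hdim hX₀ x₂
  obtain ⟨u₃, rfl⟩ := h.exists_adaptedFrame_coords hdim hX₀ x₃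
  obtain ⟨u₄, rfl⟩ := h.exists_adaptedFrame_coords hdim hX₀ x₄
  simp only [wedge2, fundamentalForm, h.J_sum_adaptedFrame, h.K_sum_adaptedFrame,
    h.S_sum_adaptedFrame, h.apply_sum_adaptedFrame hX]
  simp only [Matrix.cons_val]
  refine ⟨?_, ?_, ?_, ?_, ?_⟩ <;> ring

theorem fundamentalForm_adaptedFrame (h : IsParaHyperhermitian g J K S) {X : V} (hX : g X X = 1) :
    fundamentalForm g J X (J X) = 1 ∧ fundamentalForm g J X (K X) = 0 ∧
    fundamentalForm g J X (S X) = 0 ∧ fundamentalForm g S X (J X) = 0 ∧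
    fundamentalForm g S X (K X) = 0 ∧ fundamentalForm g S X (S X) = -1 := by
  refine ⟨?_, h.J_apply_K X, h.J_apply_S X, (h.symm _ _).trans (h.J_apply_S X),
    (h.symm _ _).trans (h.K_apply_S X), ?_⟩
  · rw [fundamentalForm, h.isometry_J, hX]
  · rw [fundamentalForm, h.antiIsometry_S, hX]

theorem J_mul_add_mul_J (h : IsParaHyperhermitian g J K S) (a s : ℝ) :
    J * (a • J - s • S) + (a • J - s • S) * J = (-(2 * a)) • (1 : Module.End ℝ V) := by
  rw [mul_sub, sub_mul, mul_smul_comm, mul_smul_comm, smul_mul_assoc, smul_mul_assoc, h.J_mul_J,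
    h.J_mul_S, h.S_mul_J]
  module

end IsParaHyperhermitian

theorem omegaPlus_coeffs {a : ℝ} (ha : 1 < a) (u v : ℝ) :
    √((a + 1) / (a - 1)) * (u - (a * u - √(a ^ 2 - 1) * v)) = -√(a ^ 2 - 1) * u + (a + 1) * v := by
  have hs : √(a ^ 2 - 1) = √((a + 1) * (a - 1)) := by ring_nf
  calc √((a + 1) / (a - 1)) * (u - (a * u - √(a ^ 2 - 1) * v))
      = -(√((a + 1) / (a - 1)) * (a - 1)) * u
          + √((a + 1) / (a - 1)) * √((a + 1) * (a - 1)) * v := by rw [hs]; ring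
    _ = -√(a ^ 2 - 1) * u + (a + 1) * v := by
      rw [Real.sqrt_div_mul_self_of_pos (by linarith), Real.sqrt_div_mul_sqrt_mul (by linarith)
        (by linarith), ← hs]

theorem omegaMinus_coeffs {a : ℝ} (ha : 1 < a) (u v : ℝ) :
    √((a - 1) / (a + 1)) * (u + (a * u - √(a ^ 2 - 1) * v)) = √(a ^ 2 - 1) * u + (1 - a) * v := by
  have hs : √(a ^ 2 - 1) = √((a - 1) * (a + 1)) := by ring_nf
  calc √((a - 1) / (a + 1)) * (u + (a * u - √(a ^ 2 - 1) * v))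
      = √((a - 1) / (a + 1)) * (a + 1) * u
          - √((a - 1) / (a + 1)) * √((a - 1) * (a + 1)) * v := by rw [hs]; ring
    _ = √(a ^ 2 - 1) * u + (1 - a) * v := by
      rw [Real.sqrt_div_mul_self_of_pos (by linarith), Real.sqrt_div_mul_sqrt_mul (by linarith)
        (by linarith), ← hs]
      ring

theorem stmt13_general (V : Type*) [AddCommGroup V] [Module ℝ V]
    (hdim : finrank ℝ V = 4)
    (g : LinearMap.BilinForm ℝ V)
    (hsymm : ∀ x y, g x y = g y x)
    (e : Basis (Fin 4) ℝ V)
    (hsig : ∀ i j, g (e i) (e j) =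
      if i = j then (if (i : ℕ) < 2 then (1 : ℝ) else -1) else 0)
    (Jp K Sp : Module.End ℝ V)
    (hJp : Jp * Jp = -1) (hK : K * K = 1) (hSp : Sp * Sp = 1)
    (hJK : Jp * K = Sp) (hKJ : K * Jp = -Sp)
    (hgJ : ∀ x y, g (Jp x) (Jp y) = g x y)
    (hgK : ∀ x y, g (K x) (K y) = - g x y)
    (hgS : ∀ x y, g (Sp x) (Sp y) = - g x y)
    (a : ℝ) (ha : 1 < a) :
    let Jm : Module.End ℝ V := a • Jp - Real.sqrt (a ^ 2 - 1) • Sp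
    let FK : V → V → ℝ := fun x y => g (K x) y
    let ωp : V → V → ℝ := fun x y =>
      Real.sqrt ((a + 1) / (a - 1)) * (g (Jp x) y - g (Jm x) y)
    let ωm : V → V → ℝ := fun x y =>
      Real.sqrt ((a - 1) / (a + 1)) * (g (Jp x) y + g (Jm x) y)
    (Jp * Jm + Jm * Jp = (-(2 * a)) • (1 : Module.End ℝ V)) ∧
    (∀ X : V, g X X = 1 →
      ωp X (Jp X) = -Real.sqrt (a ^ 2 - 1) ∧ ωm X (Jp X) = Real.sqrt (a ^ 2 - 1) ∧
      ωp X (K X) = 0 ∧ ωm X (K X) = 0 ∧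
      ωp X (Sp X) = -(a + 1) ∧ ωm X (Sp X) = a - 1) ∧
    (∀ x₁ x₂ x₃ x₄ : V,
      wedge2 FK ωp x₁ x₂ x₃ x₄ = 0 ∧ wedge2 FK ωm x₁ x₂ x₃ x₄ = 0 ∧
      wedge2 ωp ωm x₁ x₂ x₃ x₄ = 0 ∧
      wedge2 ωp ωp x₁ x₂ x₃ x₄ + wedge2 ωm ωm x₁ x₂ x₃ x₄ =
        4 * wedge2 FK FK x₁ x₂ x₃ x₄) := by
  intro Jm FK ωp ωm
  have h : IsParaHyperhermitian g Jp K Sp := ⟨hsymm, hJp, hK, hSp, hJK, hKJ, hgJ, hgK, hgS⟩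
  set s := √(a ^ 2 - 1)
  have hs : s ^ 2 = a ^ 2 - 1 := Real.sq_sqrt (by nlinarith)
  have hωp : ωp = (-s) • fundamentalForm g Jp + (a + 1) • fundamentalForm g Sp := by
    ext x y
    simp only [ωp, Jm, LinearMap.sub_apply, LinearMap.smul_apply, map_sub, map_smul, smul_eq_mul]
    exact omegaPlus_coeffs ha _ _
  have hωm : ωm = s • fundamentalForm g Jp + (1 - a) • fundamentalForm g Sp := by
    ext x y
    simp only [ωm, Jm, LinearMap.sub_apply, LinearMap.smul_apply, map_sub, map_smul, smul_eq_mul]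
    exact omegaMinus_coeffs ha _ _
  refine ⟨h.J_mul_add_mul_J a s, fun X hX => ?_, fun x₁ x₂ x₃ x₄ => ?_⟩
  · obtain ⟨hJJ, hJK, hJS, hSJ, hSK, hSS⟩ := h.fundamentalForm_adaptedFrame hX
    simp only [hωp, hωm, Pi.add_apply, Pi.smul_apply, smul_eq_mul, hJJ, hJK, hJS, hSJ, hSK, hSS]
    refine ⟨?_, ?_, ?_, ?_, ?_, ?_⟩ <;> ring
  · have hX : g (e 0) (e 0) = 1 := by simpa using hsig 0 0
    obtain ⟨hKJ, hKS, hJS, hJJ, hSS⟩ := h.wedge2_fundamentalForm_relations hdim hX x₁ x₂ x₃ x₄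
    have hSJ : wedge2 (fundamentalForm g Sp) (fundamentalForm g Jp) x₁ x₂ x₃ x₄ = 0 := by
      rw [wedge2_comm, hJS]
    have hFK : FK = fundamentalForm g K := rfl
    simp only [hFK, hωp, hωm, wedge2_add_left, wedge2_add_right, wedge2_smul_left,
      wedge2_smul_right, hKJ, hKS, hJS, hSJ, hJJ, hSS]
    refine ⟨by ring, by ring, ?_, ?_⟩
    · linear_combination (wedge2 (fundamentalForm g K) (fundamentalForm g K) x₁ x₂ x₃ x₄) * hs
    · linear_combination (-2 * wedge2 (fundamentalForm g K) (fundamentalForm g K) x₁ x₂ x₃ x₄) * hs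

theorem stmt13 (V : Type*) [AddCommGroup V] [Module ℝ V] [FiniteDimensional ℝ V]
    (hdim : finrank ℝ V = 4)
    (g : LinearMap.BilinForm ℝ V)
    (hsymm : ∀ x y, g x y = g y x)
    (e : Basis (Fin 4) ℝ V)
    (hsig : ∀ i j, g (e i) (e j) =
      if i = j then (if (i : ℕ) < 2 then (1 : ℝ) else -1) else 0)
    (Jp K Sp : Module.End ℝ V)
    (hJp : Jp * Jp = -1) (hK : K * K = 1) (hSp : Sp * Sp = 1)
    (hJK : Jp * K = Sp) (hKJ : K * Jp = -Sp)
    (hgJ : ∀ x y, g (Jp x) (Jp y) = g x y)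
    (hgK : ∀ x y, g (K x) (K y) = - g x y)
    (hgS : ∀ x y, g (Sp x) (Sp y) = - g x y)
    (a : ℝ) (ha : 1 < a) :
    let Jm : Module.End ℝ V := a • Jp - Real.sqrt (a ^ 2 - 1) • Sp
    let FK : V → V → ℝ := fun x y => g (K x) y
    let ωp : V → V → ℝ := fun x y =>
      Real.sqrt ((a + 1) / (a - 1)) * (g (Jp x) y - g (Jm x) y)
    let ωm : V → V → ℝ := fun x y =>
      Real.sqrt ((a - 1) / (a + 1)) * (g (Jp x) y + g (Jm x) y)
    (Jp * Jm + Jm * Jp = (-(2 * a)) • (1 : Module.End ℝ V)) ∧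
    (∀ X : V, g X X = 1 →
      ωp X (Jp X) = -Real.sqrt (a ^ 2 - 1) ∧ ωm X (Jp X) = Real.sqrt (a ^ 2 - 1) ∧
      ωp X (K X) = 0 ∧ ωm X (K X) = 0 ∧
      ωp X (Sp X) = -(a + 1) ∧ ωm X (Sp X) = a - 1) ∧
    (∀ x₁ x₂ x₃ x₄ : V,
      wedge2 FK ωp x₁ x₂ x₃ x₄ = 0 ∧ wedge2 FK ωm x₁ x₂ x₃ x₄ = 0 ∧
      wedge2 ωp ωm x₁ x₂ x₃ x₄ = 0 ∧
      wedge2 ωp ωp x₁ x₂ x₃ x₄ + wedge2 ωm ωm x₁ x₂ x₃ x₄ =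
        4 * wedge2 FK FK x₁ x₂ x₃ x₄) :=
  stmt13_general V hdim g hsymm e hsig Jp K Sp hJp hK hSp hJK hKJ hgJ hgK hgS a ha
end

section
/- Let (V,g) be 4-dimensional with nondegenerate g, and J₊, J₋ g-compatible complex structures with J₊J₋ + J₋J₊ = 2p·Id, p > 1. Set f = p - √(p²-1), K = [J₊,J₋]/(2√(p²-1)), and let θ be any vector in V. Then X := J₊θ + fJ₋θ and Y := θ + Kθ satisfy: g(X,X) = g(Y,Y) = 0, g(X,Y) = 0, g(X,J₊X) = g(Y,J₊Y) = 0, and g(J₊X, Y) = 2(fp - 1)·g(θ,θ). -/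
open Module

theorem stmt15 (V : Type*) [AddCommGroup V] [Module ℝ V] [FiniteDimensional ℝ V]
    (hdim : finrank ℝ V = 4)
    (g : LinearMap.BilinForm ℝ V)
    (hsymm : ∀ x y, g x y = g y x)
    (hnd : ∀ x, (∀ y, g x y = 0) → x = 0)
    (Jp Jm : Module.End ℝ V)
    (hJp : Jp * Jp = -1) (hJm : Jm * Jm = -1)
    (hgp : ∀ x y, g (Jp x) (Jp y) = g x y) (hgm : ∀ x y, g (Jm x) (Jm y) = g x y)
    (p : ℝ) (hp : 1 < p)
    (hanti : Jp * Jm + Jm * Jp = (2 * p) • (1 : Module.End ℝ V))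
    (θ : V) :
    let f : ℝ := p - Real.sqrt (p ^ 2 - 1)
    let K : Module.End ℝ V := (1 / (2 * Real.sqrt (p ^ 2 - 1))) • (Jp * Jm - Jm * Jp)
    let X : V := Jp θ + f • Jm θ
    let Y : V := θ + K θ
    g X X = 0 ∧ g Y Y = 0 ∧ g X Y = 0 ∧ g X (Jp X) = 0 ∧ g Y (Jp Y) = 0 ∧
      g (Jp X) Y = 2 * (f * p - 1) * g θ θ := by
  intro f K X Y
  set s : ℝ := Real.sqrt (p ^ 2 - 1) with hs_def
  have hpd : (0:ℝ) < p ^ 2 - 1 := by nlinarith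
  have hs2 : s ^ 2 = p ^ 2 - 1 := Real.sq_sqrt (le_of_lt hpd)
  have hspos : 0 < s := Real.sqrt_pos.mpr hpd
  have hsne : s ≠ 0 := ne_of_gt hspos
  have hf : f ^ 2 - 2 * p * f + 1 = 0 := by
    show (p - s) ^ 2 - 2 * p * (p - s) + 1 = 0
    nlinarith [hs2]
  -- pointwise versions
  have hJp' : ∀ x, Jp (Jp x) = -x := by
    intro x
    have := LinearMap.congr_fun hJp x
    simpa [Module.End.mul_apply] using this
  have hJm' : ∀ x, Jm (Jm x) = -x := by
    intro x
    have := LinearMap.congr_fun hJm x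
    simpa [Module.End.mul_apply] using this
  have hanti' : ∀ x, Jp (Jm x) + Jm (Jp x) = (2 * p) • x := by
    intro x
    have := LinearMap.congr_fun hanti x
    simpa [Module.End.mul_apply] using this
  have gJp : ∀ x y, g (Jp x) y = - g x (Jp y) := by
    intro x y
    have h := hgp x (Jp y)
    rw [hJp' y, map_neg] at h
    linarith
  have gJm : ∀ x y, g (Jm x) y = - g x (Jm y) := by
    intro x y
    have h := hgm x (Jm y)
    rw [hJm' y, map_neg] at h
    linarith
  have skewp : ∀ x, g x (Jp x) = 0 := by
    intro x
    have h := gJp x x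
    rw [hsymm (Jp x) x] at h
    linarith
  have skewm : ∀ x, g x (Jm x) = 0 := by
    intro x
    have h := gJm x x
    rw [hsymm (Jm x) x] at h
    linarith
  set a : ℝ := g θ θ with ha_def
  -- basic inner products
  have hAA : g (Jp θ) (Jp θ) = a := hgp θ θ
  have hBB : g (Jm θ) (Jm θ) = a := hgm θ θ
  have hθA : g θ (Jp θ) = 0 := skewp θ
  have hθB : g θ (Jm θ) = 0 := skewm θ
  have hθCD : g θ (Jp (Jm θ)) = g θ (Jm (Jp θ)) := by
    have e1 : g θ (Jp (Jm θ)) = - g (Jm θ) (Jp θ) := by rw [hsymm θ (Jp (Jm θ)), gJp]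
    have e2 : g θ (Jm (Jp θ)) = - g (Jp θ) (Jm θ) := by rw [hsymm θ (Jm (Jp θ)), gJm]
    rw [e1, e2, hsymm (Jm θ) (Jp θ)]
  have hsum : g θ (Jp (Jm θ)) + g θ (Jm (Jp θ)) = 2 * p * a := by
    have h := congrArg (g θ) (hanti' θ)
    rw [map_add, map_smul, smul_eq_mul] at h
    linarith [h]
  have hθC : g θ (Jp (Jm θ)) = p * a := by linarith [hθCD, hsum]
  have hθD : g θ (Jm (Jp θ)) = p * a := by linarith [hθCD, hsum]
  have hAB : g (Jp θ) (Jm θ) = -(p * a) := by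
    have h := gJp θ (Jm θ)
    rw [hsymm (Jp θ) (Jm θ)] at h
    have h2 : g (Jm θ) (Jp θ) = - g θ (Jp (Jm θ)) := by
      rw [hsymm (Jm θ) (Jp θ)] at h ⊢; exact h
    rw [hsymm (Jp θ) (Jm θ), h2, hθC]
  have hAC : g (Jp θ) (Jp (Jm θ)) = 0 := by rw [hgp θ (Jm θ)]; exact hθB
  have hAD : g (Jp θ) (Jm (Jp θ)) = 0 := skewm (Jp θ)
  have hBC : g (Jm θ) (Jp (Jm θ)) = 0 := skewp (Jm θ)
  have hBD : g (Jm θ) (Jm (Jp θ)) = 0 := by rw [hgm θ (Jp θ)]; exact hθA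
  have hCC : g (Jp (Jm θ)) (Jp (Jm θ)) = a := by rw [hgp (Jm θ) (Jm θ)]; exact hBB
  have hDD : g (Jm (Jp θ)) (Jm (Jp θ)) = a := by rw [hgm (Jp θ) (Jp θ)]; exact hAA
  have hJpJmJp : Jp (Jm (Jp θ)) = (2 * p) • Jp θ + Jm θ := by
    have h := hanti' (Jp θ)
    have h2 : Jm (Jp (Jp θ)) = - Jm θ := by rw [hJp' θ, map_neg]
    rw [h2] at h
    linear_combination (norm := module) h
  have hCD : g (Jp (Jm θ)) (Jm (Jp θ)) = (2 * p ^ 2 - 1) * a := by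
    rw [gJp, hJpJmJp, map_add, map_smul, smul_eq_mul, hsymm (Jm θ) (Jp θ), hAB, hBB]
    ring
  have hDC : g (Jm (Jp θ)) (Jp (Jm θ)) = (2 * p ^ 2 - 1) * a := by
    rw [hsymm]; exact hCD
  -- unfold K θ
  have hKθ : K θ = (1 / (2 * s)) • (Jp (Jm θ) - Jm (Jp θ)) := by
    show ((1 / (2 * s)) • (Jp * Jm - Jm * Jp)) θ = _
    simp [LinearMap.smul_apply, LinearMap.sub_apply, Module.End.mul_apply]
  have hYdef : Y = θ + (1 / (2 * s)) • (Jp (Jm θ) - Jm (Jp θ)) := by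
    show θ + K θ = _
    rw [hKθ]
  have hXdef : X = Jp θ + f • Jm θ := rfl
  have hJpX : Jp X = -θ + f • Jp (Jm θ) := by
    rw [hXdef, map_add, map_smul, hJp' θ]
  refine ⟨?_, ?_, ?_, skewp X, skewp Y, ?_⟩
  · rw [hXdef]
    simp only [map_add, map_smul, LinearMap.add_apply, LinearMap.smul_apply, smul_eq_mul]
    rw [hAA, hAB, hBB, hsymm (Jm θ) (Jp θ), hAB]
    linear_combination a * hf
  · rw [hYdef]
    simp only [map_add, map_sub, map_smul, LinearMap.add_apply, LinearMap.sub_apply,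
      LinearMap.smul_apply, smul_eq_mul]
    rw [hθC, hθD, hCC, hDD, hCD, hDC, hsymm (Jp (Jm θ)) θ, hsymm (Jm (Jp θ)) θ, hθC, hθD]
    field_simp
    ring_nf
    linear_combination (4 * (g θ θ)) * hs2
  · rw [hXdef, hYdef]
    simp only [map_add, map_sub, map_smul, LinearMap.add_apply, LinearMap.sub_apply,
      LinearMap.smul_apply, smul_eq_mul]
    rw [hAC, hAD, hBC, hBD, hsymm (Jp θ) θ, hsymm (Jm θ) θ, hθA, hθB]
    ring
  · rw [hJpX, hYdef]
    simp only [map_add, map_sub, map_neg, map_smul, LinearMap.add_apply, LinearMap.sub_apply,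
      LinearMap.neg_apply, LinearMap.smul_apply, smul_eq_mul]
    rw [hθC, hθD, hCC, hCD, hsymm (Jp (Jm θ)) θ, hθC]
    have hfs : f = p - s := rfl
    rw [hfs]
    field_simp
    ring_nf
    linear_combination (2 * p * (g θ θ)) * hs2
end

section
/- In the setting above with g(θ,θ) ≠ 0 and p > 1, the four vectors X = J₊θ + fJ₋θ, Y = θ + Kθ, J₊X, J₊Y are linearly independent, hence form a basis of the 4-dimensional space V. -/
/-!
Write `W = J₊J₋` and `s = √(p² - 1)`. The relation `J₋J₊ = 2p - W` and compatibility give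
`g(θ, Wθ) = p g(θ, θ)`, so the pairs `(J₊θ, J₋θ)` and `(θ, Wθ)` are mutually orthogonal, each with
Gram matrix `g(θ, θ) [[1, ∓p], [∓p, 1]]`. As `X = J₊θ + f J₋θ` and `Y = (1 - p/s) θ + (1/s) Wθ`,
this yields `g(X, X) = g(Y, Y) = g(X, Y) = 0` and `g(J₊X, Y) = -2fs g(θ, θ) ≠ 0`. For isotropic,
orthogonal `X, Y` and a compatible `J`, the Gram matrix of `X, Y, JX, JY` is then antidiagonal with
nonzero entries `±g(JX, Y)`, so these four vectors are independent, hence a basis as `dim V = 4`.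
-/

open Module

structure LinearMap.BilinForm.IsCompatibleComplexStructure {𝕜 V : Type*} [Field 𝕜]
    [AddCommGroup V] [Module 𝕜 V] (g : LinearMap.BilinForm 𝕜 V) (J : Module.End 𝕜 V) : Prop where
  mul_self : J * J = -1
  apply_apply : ∀ x y, g (J x) (J y) = g x y

theorem LinearMap.linearIndependent_of_biorthogonal {𝕜 M N ι : Type*} [Field 𝕜] [AddCommGroup M]
    [Module 𝕜 M] [AddCommGroup N] [Module 𝕜 N] [Fintype ι] (B : M →ₗ[𝕜] N →ₗ[𝕜] 𝕜) {v : ι → M}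
    (w : ι → N) (hoff : ∀ i j, i ≠ j → B (v i) (w j) = 0) (hdiag : ∀ i, B (v i) (w i) ≠ 0) :
    LinearIndependent 𝕜 v := by
  rw [Fintype.linearIndependent_iff]
  intro c hc j
  have hj : ∑ i, c i * B (v i) (w j) = 0 := by
    simpa using congrArg (fun x => B x (w j)) hc
  rw [Finset.sum_eq_single j (fun i _ hij => by rw [hoff i j hij, mul_zero])
    (fun h => absurd (Finset.mem_univ j) h)] at hj
  exact (mul_eq_zero.mp hj).resolve_right (hdiag j)

theorem Module.End.mul_sub_mul_apply_of_anticomm {R V : Type*} [CommRing R] [AddCommGroup V]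
    [Module R V] {A B : Module.End R V} {p : R} (hanti : A * B + B * A = (2 * p) • 1) (x : V) :
    (A * B - B * A) x = (2 : R) • A (B x) - (2 * p) • x := by
  have h := LinearMap.congr_fun hanti x
  simp only [LinearMap.add_apply, Module.End.mul_apply, LinearMap.smul_apply,
    Module.End.one_apply] at h
  rw [LinearMap.sub_apply, Module.End.mul_apply, Module.End.mul_apply, ← h]
  module

theorem Module.End.add_smul_commutator_apply_of_anticomm {𝕜 V : Type*} [Field 𝕜]
    [NeZero (2 : 𝕜)] [AddCommGroup V] [Module 𝕜 V] {A B : Module.End 𝕜 V} {p s : 𝕜} (hs : s ≠ 0)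
    (hanti : A * B + B * A = (2 * p) • 1) (x : V) :
    x + ((1 / (2 * s)) • (A * B - B * A)) x = (1 - p / s) • x + (1 / s) • A (B x) := by
  rw [LinearMap.smul_apply, Module.End.mul_sub_mul_apply_of_anticomm hanti]
  match_scalars
  · field_simp
    ring
  · field_simp

namespace LinearMap.BilinForm.IsCompatibleComplexStructure

variable {𝕜 V : Type*} [Field 𝕜] [AddCommGroup V] [Module 𝕜 V] {g : LinearMap.BilinForm 𝕜 V}
  {J : Module.End 𝕜 V}

theorem apply_apply_eq_neg (hJ : g.IsCompatibleComplexStructure J) (v : V) : J (J v) = -v := by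
  simpa using LinearMap.congr_fun hJ.mul_self v

theorem apply_left (hJ : g.IsCompatibleComplexStructure J) (x y : V) :
    g (J x) y = -g x (J y) := by
  have h := hJ.apply_apply x (J y)
  rw [hJ.apply_apply_eq_neg, map_neg] at h
  linear_combination -h

variable [NeZero (2 : 𝕜)]

theorem apply_self_apply (hsymm : ∀ x y, g x y = g y x)
    (hJ : g.IsCompatibleComplexStructure J) (x : V) : g x (J x) = 0 := by
  have h : (2 : 𝕜) * g x (J x) = 0 := by
    linear_combination hsymm x (J x) + hJ.apply_left x x
  exact (mul_eq_zero.mp h).resolve_left two_ne_zero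

theorem linearIndependent_of_isotropic (hsymm : ∀ x y, g x y = g y x)
    (hJ : g.IsCompatibleComplexStructure J) {X Y : V} (hXX : g X X = 0) (hYY : g Y Y = 0)
    (hXY : g X Y = 0) (hJXY : g (J X) Y ≠ 0) :
    LinearIndependent 𝕜 ![X, Y, J X, J Y] := by
  have hYX : g Y X = 0 := by rw [hsymm, hXY]
  have hJXX : g (J X) X = 0 := by rw [hsymm, hJ.apply_self_apply hsymm]
  have hJYY : g (J Y) Y = 0 := by rw [hsymm, hJ.apply_self_apply hsymm]
  refine LinearMap.linearIndependent_of_biorthogonal g ![J Y, J X, Y, X] ?_ ?_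
  · intro i j hij
    fin_cases i <;> fin_cases j <;>
      simp [hXX, hYY, hXY, hYX, hJXX, hJYY, hJ.apply_apply, hJ.apply_self_apply hsymm] at hij ⊢
  · have hXJY : g X (J Y) = -g (J X) Y := by rw [hJ.apply_left, neg_neg]
    have hYJX : g Y (J X) = g (J X) Y := hsymm _ _
    have hJYX : g (J Y) X = -g (J X) Y := by rw [hJ.apply_left, hYJX]
    intro i
    fin_cases i <;> simp [hXJY, hYJX, hJYX, hJXY]

variable {Jp Jm : Module.End 𝕜 V} {p : 𝕜}

theorem apply_mul_apply_self_of_anticomm (hsymm : ∀ x y, g x y = g y x)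
    (hp : g.IsCompatibleComplexStructure Jp) (hm : g.IsCompatibleComplexStructure Jm)
    (hanti : Jp * Jm + Jm * Jp = (2 * p) • 1) (x : V) :
    g x (Jp (Jm x)) = p * g x x := by
  have hmp : Jm (Jp x) = (2 * p) • x - Jp (Jm x) := by
    rw [eq_sub_iff_add_eq', ← Module.End.mul_apply, ← Module.End.mul_apply, ← LinearMap.add_apply,
      hanti, LinearMap.smul_apply, Module.End.one_apply]
  have h := hm.apply_left (Jp x) x
  rw [hmp, hp.apply_left, map_sub, map_smul, LinearMap.sub_apply, LinearMap.smul_apply,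
    smul_eq_mul, hsymm (Jp (Jm x))] at h
  have h2 : (2 : 𝕜) * (g x (Jp (Jm x)) - p * g x x) = 0 := by linear_combination -h
  exact sub_eq_zero.mp ((mul_eq_zero.mp h2).resolve_left two_ne_zero)

theorem apply_apply_of_anticomm (hsymm : ∀ x y, g x y = g y x)
    (hp : g.IsCompatibleComplexStructure Jp) (hm : g.IsCompatibleComplexStructure Jm)
    (hanti : Jp * Jm + Jm * Jp = (2 * p) • 1) (x : V) :
    g (Jp x) (Jm x) = -(p * g x x) := by
  rw [hp.apply_left, apply_mul_apply_self_of_anticomm hsymm hp hm hanti]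

theorem apply_add_smul_self (hsymm : ∀ x y, g x y = g y x)
    (hp : g.IsCompatibleComplexStructure Jp) (hm : g.IsCompatibleComplexStructure Jm)
    (hanti : Jp * Jm + Jm * Jp = (2 * p) • 1) (θ : V) (f : 𝕜) :
    g (Jp θ + f • Jm θ) (Jp θ + f • Jm θ) = (1 - 2 * f * p + f ^ 2) * g θ θ := by
  have hpm := apply_apply_of_anticomm hsymm hp hm hanti θ
  have hmp : g (Jm θ) (Jp θ) = -(p * g θ θ) := by rw [hsymm, hpm]
  simp only [map_add, map_smul, LinearMap.add_apply, LinearMap.smul_apply, smul_eq_mul,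
    hp.apply_apply, hm.apply_apply, hpm, hmp]
  ring

theorem apply_smul_add_smul_self (hsymm : ∀ x y, g x y = g y x)
    (hp : g.IsCompatibleComplexStructure Jp) (hm : g.IsCompatibleComplexStructure Jm)
    (hanti : Jp * Jm + Jm * Jp = (2 * p) • 1) (θ : V) (a b : 𝕜) :
    g (a • θ + b • Jp (Jm θ)) (a • θ + b • Jp (Jm θ)) =
      (a ^ 2 + 2 * a * b * p + b ^ 2) * g θ θ := by
  have h := apply_mul_apply_self_of_anticomm hsymm hp hm hanti θ
  have h' : g (Jp (Jm θ)) θ = p * g θ θ := by rw [hsymm, h]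
  simp only [map_add, map_smul, LinearMap.add_apply, LinearMap.smul_apply, smul_eq_mul,
    hp.apply_apply, hm.apply_apply, h, h']
  ring

theorem apply_add_smul_smul_add_smul (hsymm : ∀ x y, g x y = g y x)
    (hp : g.IsCompatibleComplexStructure Jp) (hm : g.IsCompatibleComplexStructure Jm)
    (θ : V) (f a b : 𝕜) :
    g (Jp θ + f • Jm θ) (a • θ + b • Jp (Jm θ)) = 0 := by
  have hpθ : g (Jp θ) θ = 0 := by rw [hsymm, hp.apply_self_apply hsymm]
  have hmθ : g (Jm θ) θ = 0 := by rw [hsymm, hm.apply_self_apply hsymm]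
  have hmW : g (Jm θ) (Jp (Jm θ)) = 0 := hp.apply_self_apply hsymm _
  simp only [map_add, map_smul, LinearMap.add_apply, LinearMap.smul_apply, smul_eq_mul,
    hp.apply_apply, hm.apply_self_apply hsymm, hpθ, hmθ, hmW]
  ring

theorem apply_apply_add_smul_smul_add_smul (hsymm : ∀ x y, g x y = g y x)
    (hp : g.IsCompatibleComplexStructure Jp) (hm : g.IsCompatibleComplexStructure Jm)
    (hanti : Jp * Jm + Jm * Jp = (2 * p) • 1) (θ : V) (f a b : 𝕜) :
    g (Jp (Jp θ + f • Jm θ)) (a • θ + b • Jp (Jm θ)) =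
      (f * a * p + f * b - a - b * p) * g θ θ := by
  have h := apply_mul_apply_self_of_anticomm hsymm hp hm hanti θ
  have h' : g (Jp (Jm θ)) θ = p * g θ θ := by rw [hsymm, h]
  simp only [map_add, map_smul, hp.apply_apply_eq_neg, map_neg, LinearMap.add_apply,
    LinearMap.neg_apply, LinearMap.smul_apply, smul_eq_mul, hp.apply_apply, hm.apply_apply, h, h']
  ring

end LinearMap.BilinForm.IsCompatibleComplexStructure

open LinearMap.BilinForm.IsCompatibleComplexStructure in
theorem stmt16_general (V : Type*) [AddCommGroup V] [Module ℝ V]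
    (hdim : finrank ℝ V = 4)
    (g : LinearMap.BilinForm ℝ V)
    (hsymm : ∀ x y, g x y = g y x)
    (Jp Jm : Module.End ℝ V)
    (hJp : Jp * Jp = -1) (hJm : Jm * Jm = -1)
    (hgp : ∀ x y, g (Jp x) (Jp y) = g x y) (hgm : ∀ x y, g (Jm x) (Jm y) = g x y)
    (p : ℝ) (hp : 1 < p)
    (hanti : Jp * Jm + Jm * Jp = (2 * p) • (1 : Module.End ℝ V))
    (θ : V) (hθ : g θ θ ≠ 0) :
    let f : ℝ := p - Real.sqrt (p ^ 2 - 1)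
    let K : Module.End ℝ V := (1 / (2 * Real.sqrt (p ^ 2 - 1))) • (Jp * Jm - Jm * Jp)
    let X : V := Jp θ + f • Jm θ
    let Y : V := θ + K θ
    LinearIndependent ℝ ![X, Y, Jp X, Jp Y] ∧
      Submodule.span ℝ {X, Y, Jp X, Jp Y} = ⊤ := by
  intro f K X Y
  have hJp' : g.IsCompatibleComplexStructure Jp := ⟨hJp, hgp⟩
  have hJm' : g.IsCompatibleComplexStructure Jm := ⟨hJm, hgm⟩
  set s := Real.sqrt (p ^ 2 - 1)
  have hs : s ^ 2 = p ^ 2 - 1 := Real.sq_sqrt (by nlinarith)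
  have hs0 : 0 < s := Real.sqrt_pos.mpr (by nlinarith)
  have hsp : s < p := by nlinarith
  have hY : Y = (1 - p / s) • θ + (1 / s) • Jp (Jm θ) :=
    Module.End.add_smul_commutator_apply_of_anticomm hs0.ne' hanti θ
  have hli : LinearIndependent ℝ ![X, Y, Jp X, Jp Y] := by
    refine hJp'.linearIndependent_of_isotropic hsymm ?_ ?_ ?_ ?_
    · rw [apply_add_smul_self hsymm hJp' hJm' hanti]
      linear_combination (g θ θ) * hs
    · rw [hY, apply_smul_add_smul_self hsymm hJp' hJm' hanti]
      field_simp
      linear_combination (g θ θ) * hs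
    · rw [hY, apply_add_smul_smul_add_smul hsymm hJp' hJm']
    · rw [hY, apply_apply_add_smul_smul_add_smul hsymm hJp' hJm' hanti]
      have hcoef : (p - s) * (1 - p / s) * p + (p - s) * (1 / s) - (1 - p / s) - 1 / s * p =
          -(2 * (p - s) * s) := by
        field_simp
        linear_combination (p - 2 * s) * hs
      rw [hcoef]
      exact mul_ne_zero (by nlinarith) hθ
  refine ⟨hli, ?_⟩
  have hspan := hli.span_eq_top_of_card_eq_finrank (by simp [hdim])
  simpa only [Matrix.range_cons, Matrix.range_empty, Set.union_empty, Set.singleton_union]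
    using hspan

theorem stmt16 (V : Type*) [AddCommGroup V] [Module ℝ V] [FiniteDimensional ℝ V]
    (hdim : finrank ℝ V = 4)
    (g : LinearMap.BilinForm ℝ V)
    (hsymm : ∀ x y, g x y = g y x)
    (hnd : ∀ x, (∀ y, g x y = 0) → x = 0)
    (Jp Jm : Module.End ℝ V)
    (hJp : Jp * Jp = -1) (hJm : Jm * Jm = -1)
    (hgp : ∀ x y, g (Jp x) (Jp y) = g x y) (hgm : ∀ x y, g (Jm x) (Jm y) = g x y)
    (p : ℝ) (hp : 1 < p)
    (hanti : Jp * Jm + Jm * Jp = (2 * p) • (1 : Module.End ℝ V))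
    (θ : V) (hθ : g θ θ ≠ 0) :
    let f : ℝ := p - Real.sqrt (p ^ 2 - 1)
    let K : Module.End ℝ V := (1 / (2 * Real.sqrt (p ^ 2 - 1))) • (Jp * Jm - Jm * Jp)
    let X : V := Jp θ + f • Jm θ
    let Y : V := θ + K θ
    LinearIndependent ℝ ![X, Y, Jp X, Jp Y] ∧
      Submodule.span ℝ {X, Y, Jp X, Jp Y} = ⊤ :=
  stmt16_general V hdim g hsymm Jp Jm hJp hJm hgp hgm p hp hanti θ hθ
end
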